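/- Let n ≥ 2, let H be an n×n real symmetric positive definite matrix, let Q_m be an n×n real matrix with Q_m + Q_mᵀ positive semidefinite, B = diag(−1,0,…,0,1), D_m = H⁻¹(Q_m + B/2), e₀ = (1,0,…,0)ᵀ, and τ ≤ −1/2. Write ‖x‖_H = √(xᵀHx). If ζ : [0,T] → ℝⁿ is differentiable, d : [0,T] → ℝⁿ is continuous, and ζ'(t) = −D_m ζ(t) + τ H⁻¹ e₀ (ζ(t))₁ + d(t) for all t ∈ [0,T], then for every t ∈ [0,T]: ‖ζ(t)‖_H ≤ ‖ζ(0)‖_H + ∫₀ᵗ ‖d(s)‖_H ds. -/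

import Mathlib

/-!
Multiplying the error equation by `ζᵀH` gives
`½ (d/dt) ‖ζ‖²_H = -ζᵀQ_mζ - ½ ζᵀBζ + τ ζ₁² + ζᵀHd`.
Since `Q_m + Q_mᵀ` is positive semidefinite, `ζᵀBζ = ζₙ² - ζ₁²` and `τ ≤ -½`, every term except the
forcing is nonpositive, so by Cauchy–Schwarz in the `H` inner product
`(d/dt) ‖ζ‖²_H ≤ 2 ‖ζ‖_H ‖d‖_H`, which integrates to the bound on `‖ζ‖_H`.
-/

open Matrix Set MeasureTheory intervalIntegral

theorem Real.sqrt_add_sq_le (x : ℝ) {ε : ℝ} (hε : 0 ≤ ε) : √(x + ε ^ 2) ≤ √x + ε := by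
  rw [Real.sqrt_le_left (by positivity)]
  rcases le_total 0 x with hx | hx
  · nlinarith [Real.sqrt_nonneg x, Real.sq_sqrt hx]
  · nlinarith [Real.sqrt_eq_zero'.2 hx]

section
variable {𝕜 ι : Type*} [NontriviallyNormedField 𝕜] [Fintype ι] {f g : 𝕜 → ι → 𝕜}
  {f' g' : ι → 𝕜} {t : 𝕜}

theorem HasDerivAt.dotProduct (hf : HasDerivAt f f' t) (hg : HasDerivAt g g' t) :
    HasDerivAt (fun s => f s ⬝ᵥ g s) (f' ⬝ᵥ g t + f t ⬝ᵥ g') t := by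
  have := HasDerivAt.fun_sum (u := Finset.univ) fun i _ =>
    (hasDerivAt_pi.1 hf i).fun_mul (hasDerivAt_pi.1 hg i)
  rwa [Finset.sum_add_distrib] at this

theorem HasDerivAt.mulVec (A : Matrix ι ι 𝕜) (hf : HasDerivAt f f' t) :
    HasDerivAt (fun s => A *ᵥ f s) (A *ᵥ f') t :=
  hasDerivAt_pi.2 fun i => by
    have h := (hasDerivAt_const t (A i)).dotProduct hf
    rw [zero_dotProduct, zero_add] at h
    exact h

theorem HasDerivAt.dotProduct_mulVec_self {A : Matrix ι ι 𝕜} (hA : Aᵀ = A)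
    (hf : HasDerivAt f f' t) :
    HasDerivAt (fun s => f s ⬝ᵥ (A *ᵥ f s)) (2 * (f t ⬝ᵥ (A *ᵥ f'))) t := by
  convert hf.dotProduct (hf.mulVec A) using 1
  rw [dotProduct_comm, dotProduct_mulVec, ← mulVec_transpose, hA]
  ring
end

theorem sqrt_le_sqrt_add_integral_of_hasDerivAt_le {E E' g : ℝ → ℝ} {a b : ℝ} (hab : a ≤ b)
    (hEc : ContinuousOn E (Icc a b)) (hE : ∀ t ∈ Ioo a b, HasDerivAt E (E' t) t)
    (hE0 : ∀ t ∈ Ioo a b, 0 ≤ E t) (hg : IntegrableOn g (Icc a b))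
    (hg0 : ∀ t ∈ Ioo a b, 0 ≤ g t) (hE' : ∀ t ∈ Ioo a b, E' t ≤ 2 * √(E t) * g t) :
    √(E b) ≤ √(E a) + ∫ t in a..b, g t := by
  refine le_of_forall_pos_le_add fun ε hε => ?_
  -- `√E` need not be differentiable where `E` vanishes, so we work with `√(E + ε²)` instead.
  have hderiv : ∀ t ∈ Ioo a b, HasDerivAt (fun s => √(E s + ε ^ 2))
      (E' t / (2 * √(E t + ε ^ 2))) t := fun t ht =>
    ((hE t ht).add_const _).sqrt (by have := hE0 t ht; positivity)
  have hslope : ∀ t ∈ Ioo a b, E' t / (2 * √(E t + ε ^ 2)) ≤ g t := by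
    intro t ht
    have hE0t := hE0 t ht
    have hle : √(E t) ≤ √(E t + ε ^ 2) :=
      Real.sqrt_le_sqrt (le_add_of_nonneg_right (by positivity))
    rw [div_le_iff₀ (by positivity)]
    nlinarith [hE' t ht, hg0 t ht]
  have hFTC := sub_le_integral_of_hasDeriv_right_of_le (g := fun s => √(E s + ε ^ 2)) hab
    ((hEc.add continuousOn_const).sqrt) (fun t ht => (hderiv t ht).hasDerivWithinAt) hg hslope
  calc √(E b) ≤ √(E b + ε ^ 2) := Real.sqrt_le_sqrt (le_add_of_nonneg_right (by positivity))
    _ ≤ √(E a + ε ^ 2) + ∫ t in a..b, g t := by linarith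
    _ ≤ √(E a) + (∫ t in a..b, g t) + ε := by linarith [Real.sqrt_add_sq_le (E a) hε.le]

theorem Matrix.PosSemidef.dotProduct_mulVec_le_sqrt_mul_sqrt {ι : Type*} [Fintype ι]
    {H : Matrix ι ι ℝ} (hH : H.PosSemidef) (x y : ι → ℝ) :
    x ⬝ᵥ (H *ᵥ y) ≤ √(x ⬝ᵥ (H *ᵥ x)) * √(y ⬝ᵥ (H *ᵥ y)) := by
  let := H.toSeminormedAddCommGroup hH
  let := H.toInnerProductSpace hH
  have hinner (u v : ι → ℝ) : inner ℝ u v = u ⬝ᵥ (H *ᵥ v) := dotProduct_comm _ _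
  simpa only [norm_eq_sqrt_re_inner (𝕜 := ℝ), hinner, RCLike.re_to_real] using
    real_inner_le_norm x y

theorem Matrix.dotProduct_mulVec_self_nonneg_of_posSemidef_add_transpose {ι : Type*} [Fintype ι]
    {Q : Matrix ι ι ℝ} (hQ : (Q + Qᵀ).PosSemidef) (x : ι → ℝ) : 0 ≤ x ⬝ᵥ (Q *ᵥ x) := by
  have h := hQ.dotProduct_mulVec_nonneg x
  rw [star_trivial, add_mulVec, dotProduct_add, mulVec_transpose,
    dotProduct_comm x (x ᵥ* Q), ← dotProduct_mulVec] at h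
  linarith

def sbpBoundary (n : ℕ) : Matrix (Fin n) (Fin n) ℝ :=
  diagonal fun i => if i.val = 0 then (-1 : ℝ) else if i.val = n - 1 then 1 else 0

theorem dotProduct_sbpBoundary_mulVec {n : ℕ} (hn : 1 < n) (x : Fin n → ℝ) :
    x ⬝ᵥ (sbpBoundary n *ᵥ x) = x ⟨n - 1, by omega⟩ ^ 2 - x ⟨0, by omega⟩ ^ 2 := by
  have hne : (⟨0, by omega⟩ : Fin n) ≠ ⟨n - 1, by omega⟩ := by
    simp only [ne_eq, Fin.mk.injEq]; omega
  simp only [sbpBoundary, dotProduct, mulVec_diagonal]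
  rw [Fintype.sum_eq_add _ _ hne]
  · simp only [↓reduceIte, show n - 1 ≠ 0 by omega]
    ring
  · rintro i ⟨h0, h1⟩
    rw [if_neg (fun h => h0 (Fin.ext h)), if_neg (fun h => h1 (Fin.ext h))]
    ring

theorem upwind_sat_energy_le {n : ℕ} (hn : 1 < n) {H Qm : Matrix (Fin n) (Fin n) ℝ}
    (hH : IsUnit H) (hQ : (Qm + Qmᵀ).PosSemidef) {τ : ℝ} (hτ : τ ≤ -1/2)
    (x y : Fin n → ℝ) :
    x ⬝ᵥ (H *ᵥ (-((H⁻¹ * (Qm + (1/2 : ℝ) • sbpBoundary n)) *ᵥ x)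
      + (τ * x ⟨0, by omega⟩) • (H⁻¹ *ᵥ Pi.single ⟨0, by omega⟩ 1) + y))
      ≤ x ⬝ᵥ (H *ᵥ y) := by
  have hHH : H * H⁻¹ = 1 := mul_nonsing_inv H ((isUnit_iff_isUnit_det H).mp hH)
  simp only [mulVec_add, mulVec_neg, mulVec_smul, mulVec_mulVec, ← Matrix.mul_assoc, hHH,
    Matrix.one_mul, one_mulVec, add_mulVec, smul_mulVec, dotProduct_add, dotProduct_neg,
    dotProduct_smul, dotProduct_single, smul_eq_mul]
  rw [dotProduct_sbpBoundary_mulVec hn]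
  nlinarith [dotProduct_mulVec_self_nonneg_of_posSemidef_add_transpose hQ x,
    sq_nonneg (x ⟨n - 1, by omega⟩), sq_nonneg (x ⟨0, by omega⟩)]

/-- Energy estimate for the error equation of the upwind SBP-SAT
semidiscretization of the advection equation with truncation error `d` as
forcing: `‖ζ(t)‖_H ≤ ‖ζ(0)‖_H + ∫₀ᵗ ‖d(s)‖_H ds`. -/
theorem stmt_12 (n : ℕ) (hn : 2 ≤ n) (T : ℝ)
    (H Qm : Matrix (Fin n) (Fin n) ℝ)
    (hH : H.PosDef) (hQ : (Qm + Qmᵀ).PosSemidef)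
    (B : Matrix (Fin n) (Fin n) ℝ)
    (hB : B = Matrix.diagonal (fun i =>
      if i.val = 0 then (-1 : ℝ) else if i.val = n - 1 then 1 else 0))
    (Dm : Matrix (Fin n) (Fin n) ℝ)
    (hDm : Dm = H⁻¹ * (Qm + (1/2 : ℝ) • B))
    (e₀ : Fin n → ℝ) (he₀ : e₀ = fun i => if i.val = 0 then 1 else 0)
    (τ : ℝ) (hτ : τ ≤ -1/2)
    (ζ d : ℝ → Fin n → ℝ)
    (hζ : ∀ t ∈ Set.Icc (0:ℝ) T, HasDerivAt ζ
      (-(Dm *ᵥ ζ t) + (τ * ζ t ⟨0, by omega⟩) • (H⁻¹ *ᵥ e₀) + d t) t)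
    (hd : ContinuousOn d (Set.Icc (0:ℝ) T)) :
    ∀ t ∈ Set.Icc (0:ℝ) T,
      Real.sqrt (ζ t ⬝ᵥ (H *ᵥ ζ t)) ≤
        Real.sqrt (ζ 0 ⬝ᵥ (H *ᵥ ζ 0))
          + ∫ s in (0:ℝ)..t, Real.sqrt (d s ⬝ᵥ (H *ᵥ d s)) := by
  intro t ht
  have hB' : B = sbpBoundary n := hB
  have he₀' : e₀ = Pi.single ⟨0, by omega⟩ 1 := by
    subst he₀; ext i; simp [Pi.single_apply, Fin.ext_iff]
  subst hDm hB' he₀'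
  have hsymm : Hᵀ = H := (conjTranspose_eq_transpose_of_trivial H).symm.trans hH.isHermitian
  have hsub : Icc 0 t ⊆ Icc 0 T := Icc_subset_Icc_right ht.2
  have hquad : Continuous fun x : Fin n → ℝ => x ⬝ᵥ (H *ᵥ x) := by fun_prop
  refine sqrt_le_sqrt_add_integral_of_hasDerivAt_le ht.1
    (fun s hs => (hζ s (hsub hs)).dotProduct_mulVec_self hsymm |>.continuousAt.continuousWithinAt)
    (fun s hs => (hζ s (hsub (Ioo_subset_Icc_self hs))).dotProduct_mulVec_self hsymm)
    (fun s _ => by simpa using hH.posSemidef.dotProduct_mulVec_nonneg (ζ s))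
    ((hquad.comp_continuousOn (hd.mono hsub)).sqrt.integrableOn_Icc)
    (fun s _ => Real.sqrt_nonneg _) (fun s _ => ?_)
  have hrate := upwind_sat_energy_le hn hH.isUnit hQ hτ (ζ s) (d s)
  have hcs := hH.posSemidef.dotProduct_mulVec_le_sqrt_mul_sqrt (ζ s) (d s)
  linarith
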